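/- For every j ∈ {2,…,d_c−1} and all y ∈ (0,1], the function G_j(y) := j(r̂_{j+1}(y) − r̂_j(y))/x is differentiable and satisfies dG_j/dy = −j (x'/x) G_{j+1} + (j−1)(x'/x) G_j, where G_{d_c} := −d_c r̂_{d_c}/x. (Derivative identity for the mean residual-degree functions, used in the proofs of Lemmas 2 and 3.) -/

import Mathlib

/-!
With `x = ελ(y)` and Bernstein polynomials `b_{n,ν}`, put `P_ν = Σ_{i∈R} ρ_i b_{i-1,ν}`. Then
`r̂_{ν+1} = x P_ν(x)`, hence `G_{ν+1} = (ν+1)(P_{ν+1} - P_ν)(x)`; for `ν + 1 = d_c` this uses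
`P_{d_c} = 0`, as every `b_{i-1,d_c}` with `i ≤ d_c` vanishes.

Degree elevation together with Mathlib's formula for `b'_{n,ν}` gives the Euler-type recurrence
`x b'_{n,ν} = ν b_{n,ν} - (ν+1) b_{n,ν+1}`. It is linear, so the `P_ν` satisfy it, and a short
computation shows that so do the `G_{ν+1}`. The chain rule with `dx/dy = x'` then gives the
identity.
-/

open Finset

namespace LDPC

/-- λ(y) = Σ_{k∈L} λ_k y^{k-1} -/
noncomputable def lamP (L : Finset ℕ) (lam : ℕ → ℝ) (y : ℝ) : ℝ :=
  ∑ k ∈ L, lam k * y ^ (k - 1)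

/-- λ'(y) = Σ_{k∈L} (k-1) λ_k y^{k-2} -/
noncomputable def lamD (L : Finset ℕ) (lam : ℕ → ℝ) (y : ℝ) : ℝ :=
  ∑ k ∈ L, ((k : ℝ) - 1) * lam k * y ^ (k - 2)

/-- λ''(y) = Σ_{k∈L} (k-1)(k-2) λ_k y^{k-3} -/
noncomputable def lamDD (L : Finset ℕ) (lam : ℕ → ℝ) (y : ℝ) : ℝ :=
  ∑ k ∈ L, ((k : ℝ) - 1) * ((k : ℝ) - 2) * lam k * y ^ (k - 3)

/-- ρ(z) = Σ_{k∈R} ρ_k z^{k-1} -/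
noncomputable def rhoP (R : Finset ℕ) (rho : ℕ → ℝ) (z : ℝ) : ℝ :=
  ∑ k ∈ R, rho k * z ^ (k - 1)

/-- ρ'(z) = Σ_{k∈R} (k-1) ρ_k z^{k-2} -/
noncomputable def rhoD (R : Finset ℕ) (rho : ℕ → ℝ) (z : ℝ) : ℝ :=
  ∑ k ∈ R, ((k : ℝ) - 1) * rho k * z ^ (k - 2)

/-- x = ελ(y) -/
noncomputable def xF (L : Finset ℕ) (lam : ℕ → ℝ) (ε y : ℝ) : ℝ := ε * lamP L lam y

/-- x' = ελ'(y) -/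
noncomputable def xD (L : Finset ℕ) (lam : ℕ → ℝ) (ε y : ℝ) : ℝ := ε * lamD L lam y

/-- x'' = ελ''(y) -/
noncomputable def xDD (L : Finset ℕ) (lam : ℕ → ℝ) (ε y : ℝ) : ℝ := ε * lamDD L lam y

/-- e = xy -/
noncomputable def eF (L : Finset ℕ) (lam : ℕ → ℝ) (ε y : ℝ) : ℝ := xF L lam ε y * y

/-- a = (x'y + x)/x -/
noncomputable def aF (L : Finset ℕ) (lam : ℕ → ℝ) (ε y : ℝ) : ℝ :=
  (xD L lam ε y * y + xF L lam ε y) / xF L lam ε y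

/-- l̂_k(y) = ε λ_k y^k -/
noncomputable def lhat (lam : ℕ → ℝ) (ε : ℝ) (k : ℕ) (y : ℝ) : ℝ := ε * lam k * y ^ k

/-- r̂_j(y); for j = 1 the special formula x(y-1+ρ(1-x)), else Σ_{i∈R} ρ_i C(i-1,j-1) x^j (1-x)^{i-j}. -/
noncomputable def rhat (L R : Finset ℕ) (lam rho : ℕ → ℝ) (ε : ℝ) (j : ℕ) (y : ℝ) : ℝ :=
  if j = 1 then xF L lam ε y * (y - 1 + rhoP R rho (1 - xF L lam ε y))
  else ∑ i ∈ R, rho i * ((i - 1).choose (j - 1) : ℝ) * xF L lam ε y ^ j *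
    (1 - xF L lam ε y) ^ (i - j)

/-- G_j(y) = j(r̂_{j+1} - r̂_j)/x for j ≤ d_c - 1, and G_{d_c}(y) = -d_c r̂_{d_c}/x. -/
noncomputable def Gf (L R : Finset ℕ) (lam rho : ℕ → ℝ) (ε : ℝ) (dc j : ℕ) (y : ℝ) : ℝ :=
  if j = dc then -((dc : ℝ) * rhat L R lam rho ε dc y) / xF L lam ε y
  else (j : ℝ) * (rhat L R lam rho ε (j + 1) y - rhat L R lam rho ε j y) / xF L lam ε y

/-- F(y) = Σ_{k∈L} (λ_k/k)[ε²(y^k-1)² + ε(y^k-1)] -/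
noncomputable def Ff (L : Finset ℕ) (lam : ℕ → ℝ) (ε y : ℝ) : ℝ :=
  ∑ k ∈ L, lam k / (k : ℝ) * (ε ^ 2 * (y ^ k - 1) ^ 2 + ε * (y ^ k - 1))

/-- F'(y) = 2Σ_{k∈L} ε²λ_k y^{2k-1} - (ε - ε̃)x -/
noncomputable def Fd (L : Finset ℕ) (lam : ℕ → ℝ) (ε y : ℝ) : ℝ :=
  2 * ∑ k ∈ L, ε ^ 2 * lam k * y ^ (2 * k - 1) - (ε - (1 - ε)) * xF L lam ε y

/-- V_{i,j}(y) = Σ_{s∈R} sρ_s C(s-1,i-1)C(s-1,j-1) x^{i+j} (1-x)^{2s-i-j} -/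
noncomputable def Vf (L R : Finset ℕ) (lam rho : ℕ → ℝ) (ε : ℝ) (i j : ℕ) (y : ℝ) : ℝ :=
  ∑ s ∈ R, (s : ℝ) * rho s * ((s - 1).choose (i - 1) : ℝ) * ((s - 1).choose (j - 1) : ℝ) *
    xF L lam ε y ^ (i + j) * (1 - xF L lam ε y) ^ (2 * s - i - j)

/-- The variable–variable block of covariance evolution, with its initial conditions. -/
def CEvv (L : Finset ℕ) (lam : ℕ → ℝ) (ε : ℝ) (δll : ℕ → ℕ → ℝ → ℝ) : Prop :=
  (∀ k ∈ L, ∀ s ∈ L, ∀ y ∈ Set.Ioc (0 : ℝ) 1,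
    HasDerivWithinAt (δll k s)
      (-(xF L lam ε y) *
          (((s : ℝ) * lhat lam ε s y / eF L lam ε y ^ 2) * ∑ t ∈ L, δll k t y
            + ((k : ℝ) * lhat lam ε k y / eF L lam ε y ^ 2) * ∑ t ∈ L, δll s t y
            - (((k : ℝ) + (s : ℝ)) / eF L lam ε y) * δll k s y)
        - xF L lam ε y * (k : ℝ) * (s : ℝ) * (lhat lam ε k y / eF L lam ε y) *
            ((if k = s then (1 : ℝ) else 0) - lhat lam ε s y / eF L lam ε y))
      (Set.Ioc 0 1) y)
  ∧ ∀ k ∈ L, ∀ s ∈ L,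
      δll k s 1 = (if k = s then (1 : ℝ) else 0) * (k : ℝ) * lam k * ε * (1 - ε)

/-- The variable–check block of covariance evolution, with its initial conditions. -/
def CEvc (L R : Finset ℕ) (lam rho : ℕ → ℝ) (ε : ℝ) (dc : ℕ)
    (δll δlr : ℕ → ℕ → ℝ → ℝ) : Prop :=
  (∀ k ∈ L, ∀ j ∈ Finset.Icc 1 (dc - 1), ∀ y ∈ Set.Ioc (0 : ℝ) 1,
    HasDerivWithinAt (δlr k j)
      (2 * (xD L lam ε y / eF L lam ε y) * Gf L R lam rho ε dc j y * ∑ t ∈ L, δll k t y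
        - (Gf L R lam rho ε dc j y / y ^ 2) * ∑ i ∈ L, ((i : ℝ) - 1) * δll k i y
        - xF L lam ε y * (aF L lam ε y - (k : ℝ)) * ((k : ℝ) * lhat lam ε k y / eF L lam ε y)
            * (Gf L R lam rho ε dc j y / y)
        - ((k : ℝ) * lhat lam ε k y / (eF L lam ε y * y)) * ∑ t ∈ L, δlr t j y
        + ((k : ℝ) / y) * δlr k j y
        - (j : ℝ) * (xD L lam ε y / xF L lam ε y) *
            ((if j + 1 = dc then
                (∑ t ∈ L, δll k t y) - ∑ j' ∈ Finset.Icc 1 (dc - 1), δlr k j' y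
              else δlr k (j + 1) y) - δlr k j y))
      (Set.Ioc 0 1) y)
  ∧ ∀ k ∈ L, ∀ j ∈ Finset.Icc 1 (dc - 1),
      δlr k j 1 = -((k : ℝ) * lam k * ε * (1 - ε)) * Gf L R lam rho ε dc j 1

/-- The check–check block of covariance evolution, with symmetry and initial conditions. -/
def CErr (L R : Finset ℕ) (lam rho : ℕ → ℝ) (ε : ℝ) (dc : ℕ)
    (δlr δrr : ℕ → ℕ → ℝ → ℝ) : Prop :=
  (∀ i ∈ Finset.Icc 1 (dc - 1), ∀ j ∈ Finset.Icc 1 (dc - 1), ∀ y ∈ Set.Ioc (0 : ℝ) 1,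
      δrr i j y = δrr j i y)
  ∧ (∀ i ∈ Finset.Icc 1 (dc - 1), ∀ j ∈ Finset.Icc 1 (dc - 1), ∀ y ∈ Set.Ioc (0 : ℝ) 1,
    HasDerivWithinAt (δrr i j)
      (-(xD L lam ε y / xF L lam ε y) *
          ((i : ℝ) * (if i + 1 = dc then
                (∑ k ∈ L, δlr k j y) - ∑ i' ∈ Finset.Icc 1 (dc - 1), δrr i' j y
              else δrr (i + 1) j y)
            + (j : ℝ) * (if j + 1 = dc then
                (∑ k ∈ L, δlr k i y) - ∑ i' ∈ Finset.Icc 1 (dc - 1), δrr i' i y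
              else δrr (j + 1) i y)
            - ((i : ℝ) + (j : ℝ)) * δrr i j y)
        + (∑ k ∈ L, ((2 * aF L lam ε y - (k : ℝ) - 1) / y ^ 2) *
            (δlr k j y * Gf L R lam rho ε dc i y + δlr k i y * Gf L R lam rho ε dc j y))
        - xF L lam ε y *
            (((xDD L lam ε y * xF L lam ε y - xD L lam ε y ^ 2) / xF L lam ε y ^ 2) *
                Gf L R lam rho ε dc i y * Gf L R lam rho ε dc j y
              + (i : ℝ) * (j : ℝ) * (xD L lam ε y / xF L lam ε y ^ 2) *
                  ((if i = j then rhat L R lam rho ε (j + 1) y + rhat L R lam rho ε j y else 0)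
                    - (if i = j + 1 then rhat L R lam rho ε i y else 0)
                    - (if j = i + 1 then rhat L R lam rho ε j y else 0))))
      (Set.Ioc 0 1) y)
  ∧ ∀ i ∈ Finset.Icc 1 (dc - 1), ∀ j ∈ Finset.Icc 1 (dc - 1),
      δrr i j 1 = (if i = j then (i : ℝ) * rhat L R lam rho ε i 1 else 0)
        - Vf L R lam rho ε i j 1
        + (∑ k ∈ L, ((k : ℝ) - 1) * lam k) * ε * (1 - ε) *
            Gf L R lam rho ε dc i 1 * Gf L R lam rho ε dc j 1

end LDPC

open Polynomial

namespace bernsteinPolynomial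

variable (A : Type*) [CommRing A]

theorem natCast_succ_mul_X_mul (n ν : ℕ) :
    ((n + 1 : ℕ) : A[X]) * X * bernsteinPolynomial A n ν =
      ((ν + 1 : ℕ) : A[X]) * bernsteinPolynomial A (n + 1) (ν + 1) := by
  have h := congrArg (Nat.cast : ℕ → A[X]) (Nat.add_one_mul_choose_eq n ν)
  push_cast at h ⊢
  simp only [bernsteinPolynomial, Nat.add_sub_add_right]
  linear_combination X ^ (ν + 1) * (1 - X) ^ (n - ν) * h

theorem X_mul_derivative (n ν : ℕ) :
    X * derivative (bernsteinPolynomial A n ν) =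
      (ν : A[X]) * bernsteinPolynomial A n ν
        - ((ν + 1 : ℕ) : A[X]) * bernsteinPolynomial A n (ν + 1) := by
  have elevate : ∀ μ, (n : A[X]) * X * bernsteinPolynomial A (n - 1) μ =
      ((μ + 1 : ℕ) : A[X]) * bernsteinPolynomial A n (μ + 1) := by
    intro μ
    rcases n with _ | n
    · simp [eq_zero_of_lt A (Nat.succ_pos μ)]
    · exact natCast_succ_mul_X_mul A n μ
  rcases ν with _ | ν
  · rw [derivative_zero]
    linear_combination -(elevate 0)
  · rw [derivative_succ]
    linear_combination (norm := (push_cast; ring)) elevate ν - elevate (ν + 1)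

end bernsteinPolynomial

namespace LDPC

noncomputable def checkPoly (R : Finset ℕ) (rho : ℕ → ℝ) (ν : ℕ) : ℝ[X] :=
  ∑ i ∈ R, C (rho i) * bernsteinPolynomial ℝ (i - 1) ν

noncomputable def gPoly (R : Finset ℕ) (rho : ℕ → ℝ) (ν : ℕ) : ℝ[X] :=
  ((ν + 1 : ℕ) : ℝ[X]) * (checkPoly R rho (ν + 1) - checkPoly R rho ν)

section

variable (R : Finset ℕ) (rho : ℕ → ℝ)

theorem X_mul_derivative_checkPoly (ν : ℕ) :
    X * derivative (checkPoly R rho ν) =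
      (ν : ℝ[X]) * checkPoly R rho ν - ((ν + 1 : ℕ) : ℝ[X]) * checkPoly R rho (ν + 1) := by
  simp only [checkPoly, derivative_sum, derivative_mul, derivative_C, zero_mul, zero_add,
    Finset.mul_sum, ← Finset.sum_sub_distrib]
  refine Finset.sum_congr rfl fun i _ => ?_
  linear_combination C (rho i) * bernsteinPolynomial.X_mul_derivative ℝ (i - 1) ν

theorem X_mul_derivative_gPoly (ν : ℕ) :
    X * derivative (gPoly R rho ν) =
      (ν : ℝ[X]) * gPoly R rho ν - ((ν + 1 : ℕ) : ℝ[X]) * gPoly R rho (ν + 1) := by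
  have hν := X_mul_derivative_checkPoly R rho ν
  have hν₁ := X_mul_derivative_checkPoly R rho (ν + 1)
  simp only [gPoly, derivative_mul, derivative_natCast, zero_mul, zero_add, derivative_sub]
  linear_combination (norm := (push_cast; ring)) ((ν : ℝ[X]) + 1) * (hν₁ - hν)

theorem checkPoly_eq_zero_of_lt {ν : ℕ} (h : ∀ i ∈ R, i - 1 < ν) : checkPoly R rho ν = 0 :=
  Finset.sum_eq_zero fun i hi => by
    rw [bernsteinPolynomial.eq_zero_of_lt ℝ (h i hi), mul_zero]

end

section

variable (L R : Finset ℕ) (lam rho : ℕ → ℝ) (ε : ℝ)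

theorem rhat_succ_eq {ν : ℕ} (hν : 1 ≤ ν) (y : ℝ) :
    rhat L R lam rho ε (ν + 1) y =
      xF L lam ε y * (checkPoly R rho ν).eval (xF L lam ε y) := by
  rw [rhat, if_neg (by omega), checkPoly, eval_finsetSum, Finset.mul_sum]
  refine Finset.sum_congr rfl fun i _ => ?_
  simp only [eval_mul, eval_C, bernsteinPolynomial, eval_natCast, eval_pow, eval_X, eval_sub,
    eval_one, Nat.add_sub_cancel, Nat.sub_sub, Nat.add_comm 1 ν]
  ring

theorem Gf_succ_eq_eval_gPoly {dc ν : ℕ} (hν : 1 ≤ ν) (hνdc : ν + 1 ≤ dc)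
    (hdc : ∀ i ∈ R, i ≤ dc) {y : ℝ} (hx : xF L lam ε y ≠ 0) :
    Gf L R lam rho ε dc (ν + 1) y = (gPoly R rho ν).eval (xF L lam ε y) := by
  rw [Gf, gPoly, eval_mul, eval_sub, eval_natCast]
  split_ifs with htop
  · subst htop
    rw [checkPoly_eq_zero_of_lt R rho fun i hi => by have := hdc i hi; omega,
      eval_zero, rhat_succ_eq L R lam rho ε hν]
    field_simp
    ring
  · rw [rhat_succ_eq L R lam rho ε hν, rhat_succ_eq L R lam rho ε (by omega : 1 ≤ ν + 1)]
    field_simp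

end

theorem xF_pos {L : Finset ℕ} (hL : L.Nonempty) {lam : ℕ → ℝ} (hlam : ∀ k ∈ L, 0 < lam k)
    {ε y : ℝ} (hε : 0 < ε) (hy : 0 < y) : 0 < xF L lam ε y :=
  mul_pos hε (Finset.sum_pos (fun k hk => mul_pos (hlam k hk) (pow_pos hy _)) hL)

theorem hasDerivAt_xF {L : Finset ℕ} (hL : ∀ k ∈ L, 1 ≤ k) (lam : ℕ → ℝ) (ε y : ℝ) :
    HasDerivAt (xF L lam ε) (xD L lam ε y) y := by
  refine (HasDerivAt.fun_sum fun k hk => ?_).const_mul ε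
  have hpow := (hasDerivAt_pow (k - 1) y).const_mul (lam k)
  refine hpow.congr_deriv ?_
  rw [Nat.sub_sub, Nat.cast_sub (hL k hk), Nat.cast_one]
  ring

theorem statement_19_general
    (L R : Finset ℕ) (hL : L.Nonempty) (hR : R.Nonempty)
    (hL2 : ∀ k ∈ L, 2 ≤ k)
    (lam rho : ℕ → ℝ)
    (hlamPos : ∀ k ∈ L, 0 < lam k)
    (ε : ℝ) (hε : ε ∈ Set.Ioo (0 : ℝ) 1)
    (dc : ℕ) (hdc : dc = R.max' hR) :
    ∀ j ∈ Finset.Icc 2 (dc - 1), ∀ y ∈ Set.Ioc (0 : ℝ) 1,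
      HasDerivWithinAt (fun z => Gf L R lam rho ε dc j z)
        (-(j : ℝ) * (xD L lam ε y / xF L lam ε y) * Gf L R lam rho ε dc (j + 1) y
          + ((j : ℝ) - 1) * (xD L lam ε y / xF L lam ε y) * Gf L R lam rho ε dc j y)
        (Set.Ioc 0 1) y := by
  intro j hj y hy
  obtain ⟨hj2, hjdc⟩ := Finset.mem_Icc.mp hj
  obtain ⟨ν, rfl⟩ : ∃ ν, j = ν + 1 := ⟨j - 1, by omega⟩
  have hRdc : ∀ i ∈ R, i ≤ dc := fun i hi => hdc ▸ R.le_max' i hi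
  have hx : ∀ z ∈ Set.Ioc (0 : ℝ) 1, xF L lam ε z ≠ 0 := fun z hz =>
    (xF_pos hL hlamPos hε.1 hz.1).ne'
  have hG : ∀ z ∈ Set.Ioc (0 : ℝ) 1,
      Gf L R lam rho ε dc (ν + 1) z = (gPoly R rho ν).eval (xF L lam ε z) := fun z hz =>
    Gf_succ_eq_eval_gPoly L R lam rho ε (by omega) (by omega) hRdc (hx z hz)
  have hderiv := ((gPoly R rho ν).hasDerivAt (xF L lam ε y)).comp y
    (hasDerivAt_xF (fun k hk => (hL2 k hk).trans' one_le_two) lam ε y)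
  refine (hderiv.hasDerivWithinAt.congr hG (hG y hy)).congr_deriv ?_
  have hrec := congrArg (eval (xF L lam ε y)) (X_mul_derivative_gPoly R rho ν)
  simp only [eval_mul, eval_sub, eval_X, eval_natCast] at hrec
  rw [Gf_succ_eq_eval_gPoly L R lam rho ε (by omega) (by omega) hRdc (hx y hy), hG y hy]
  have hxy := hx y hy
  field_simp
  linear_combination (norm := (push_cast; ring)) xD L lam ε y * hrec

theorem statement_19
    (L R : Finset ℕ) (hL : L.Nonempty) (hR : R.Nonempty)
    (hL2 : ∀ k ∈ L, 2 ≤ k) (hR2 : ∀ k ∈ R, 2 ≤ k)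
    (lam rho : ℕ → ℝ)
    (hlamPos : ∀ k ∈ L, 0 < lam k) (hlamSum : ∑ k ∈ L, lam k = 1)
    (hrhoPos : ∀ k ∈ R, 0 < rho k) (hrhoSum : ∑ k ∈ R, rho k = 1)
    (ε : ℝ) (hε : ε ∈ Set.Ioo (0 : ℝ) 1)
    (dc : ℕ) (hdc : dc = R.max' hR) :
    ∀ j ∈ Finset.Icc 2 (dc - 1), ∀ y ∈ Set.Ioc (0 : ℝ) 1,
      HasDerivWithinAt (fun z => Gf L R lam rho ε dc j z)
        (-(j : ℝ) * (xD L lam ε y / xF L lam ε y) * Gf L R lam rho ε dc (j + 1) y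
          + ((j : ℝ) - 1) * (xD L lam ε y / xF L lam ε y) * Gf L R lam rho ε dc j y)
        (Set.Ioc 0 1) y :=
  statement_19_general L R hL hR hL2 lam rho hlamPos ε hε dc hdc
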